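/- Let C > 0, 0 < λ̄ < 1. Suppose {h_j}ⱼ₌₁^n are C² (i.e. C^{1+Lip}) diffeomorphisms on B(0,R) ⊂ ℝ^d fixing 0, with Lipschitz constant C for their derivatives, ‖D_y h_j‖ ≤ λ̄ for all y, and such that each partial composition at 0 has κ-conformal derivative. Then there exists C₁ > 0 (depending only on d, R, C, κ, λ̄, λ̲) such that for all n ≥ 1 and all x ∈ B(0,R) with λ̲ ≤ m(D_yh_j), one has ‖D_x h^n‖ ≤ C₁|det D_0 h^n|^(1/d). -/

import Mathlib

noncomputable section

abbrev Euc (d : ℕ) := EuclideanSpace ℝ (Fin d)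

/-- The co-norm `m(T) = inf {‖T v‖ : ‖v‖ = 1}` of a linear map. -/
def conorm {d : ℕ} (T : Euc d →L[ℝ] Euc d) : ℝ :=
  sInf ((fun v => ‖T v‖) '' {v : Euc d | ‖v‖ = 1})

/-- An invertible linear map `D` of `ℝ^d` is `κ`-conformal if `‖D‖ · ‖D⁻¹‖ ≤ κ`. -/
def IsConformal {d : ℕ} (κ : ℝ) (D : Euc d ≃L[ℝ] Euc d) : Prop :=
  ‖(D : Euc d →L[ℝ] Euc d)‖ * ‖(D.symm : Euc d →L[ℝ] Euc d)‖ ≤ κ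

/-- `blockProd D i k = D_{i+k} ∘ ⋯ ∘ D_{i+1}`. -/
def blockProd {d : ℕ} (D : ℕ → (Euc d ≃L[ℝ] Euc d)) (i : ℕ) : ℕ → (Euc d ≃L[ℝ] Euc d)
  | 0 => ContinuousLinearEquiv.refl ℝ (Euc d)
  | k + 1 => (blockProd D i k).trans (D (i + k + 1))

/-- Determinant of an invertible continuous linear map. -/
def cdet {d : ℕ} (e : Euc d ≃L[ℝ] Euc d) : ℝ :=
  LinearMap.det ((e : Euc d →L[ℝ] Euc d).toLinearMap)

/-- `compSeq h n = h_n ∘ ⋯ ∘ h_1`. -/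
def compSeq {d : ℕ} (h : ℕ → Euc d → Euc d) : ℕ → Euc d → Euc d
  | 0 => id
  | k + 1 => h (k + 1) ∘ compSeq h k

/-!
Write `A_k = D_0h_k ⋯ D_0h_1` and `B_k = D_{x_{k-1}}h_k ⋯ D_{x_0}h_1` along the orbit
`x_k = h^k(x)`. The telescoping identity, in multiplicative form, says that `Y_k = A_k⁻¹ B_k`
satisfies `Y_{k+1} = (1 + A_k⁻¹ (D_0h_{k+1})⁻¹ (D_{x_k}h_{k+1} - D_0h_{k+1}) A_k) Y_k`.
Conformality gives `‖A_k⁻¹‖ ‖A_k‖ ≤ κ`, the co-norm bound gives `‖(D_0h_{k+1})⁻¹‖ ≤ λ̲⁻¹`, and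
the orbit contracts, `‖x_k‖ ≤ λ̄^k R`, so by the Lipschitz bound the `k`-th perturbation has norm
at most `κ C R λ̄^k / λ̲`. Hence `‖Y_n‖ ≤ ∏ (1 + κ C R λ̄^k / λ̲) ≤ exp (κ C R / (λ̲ (1 - λ̄)))`.
Finally `‖B_n‖ ≤ ‖A_n‖ ‖Y_n‖` and `‖A_n‖ ≤ κ |det A_n|^{1/d}`, because comparing volumes gives
`|det A_n|^{-1/d} ≤ ‖A_n⁻¹‖`.
-/

open Metric MeasureTheory

theorem abs_det_le_opNorm_pow {E : Type*} [NormedAddCommGroup E] [NormedSpace ℝ E]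
    [FiniteDimensional ℝ E] (T : E →L[ℝ] E) :
    |LinearMap.det (T : E →ₗ[ℝ] E)| ≤ ‖T‖ ^ Module.finrank ℝ E := by
  borelize E
  let μ : Measure E := Measure.addHaar
  have hsub : T '' ball 0 1 ⊆ closedBall 0 ‖T‖ := by
    rintro _ ⟨v, hv, rfl⟩
    simpa using T.le_opNorm_of_le (mem_ball_zero_iff.mp hv).le
  have hvol : ENNReal.ofReal |LinearMap.det (T : E →ₗ[ℝ] E)| * μ (ball 0 1)
      ≤ ENNReal.ofReal (‖T‖ ^ Module.finrank ℝ E) * μ (ball 0 1) := by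
    rw [← Measure.addHaar_image_continuousLinearMap,
      ← Measure.addHaar_closedBall μ 0 (norm_nonneg T)]
    exact measure_mono hsub
  rwa [ENNReal.mul_le_mul_iff_left (measure_ball_pos μ 0 one_pos).ne' measure_ball_lt_top.ne,
    ENNReal.ofReal_le_ofReal_iff (by positivity)] at hvol

theorem prod_one_add_mul_pow_le_exp {a r : ℝ} (ha : 0 ≤ a) (hr0 : 0 ≤ r) (hr1 : r < 1) (n : ℕ) :
    ∏ k ∈ Finset.range n, (1 + a * r ^ k) ≤ Real.exp (a / (1 - r)) := by
  refine (Real.prod_one_add_le_exp_sum _ fun k => by positivity).trans (Real.exp_le_exp.mpr ?_)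
  rw [← Finset.mul_sum, ← mul_one_div]
  gcongr
  simpa using geom_sum_Ico_le_of_lt_one (m := 0) (n := n) hr0 hr1

theorem norm_le_mul_norm_of_hasFDerivAt {E F : Type*} [NormedAddCommGroup E] [NormedSpace ℝ E]
    [NormedAddCommGroup F] [NormedSpace ℝ F] {f : E → F} {f' : E → E →L[ℝ] F} {R c : ℝ}
    (h0 : f 0 = 0) (hf : ∀ y ∈ ball (0 : E) R, HasFDerivAt f (f' y) y)
    (hbound : ∀ y ∈ ball (0 : E) R, ‖f' y‖ ≤ c) {y : E} (hy : y ∈ ball 0 R) :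
    ‖f y‖ ≤ c * ‖y‖ := by
  simpa [h0] using (convex_ball (0 : E) R).norm_image_sub_le_of_norm_hasFDerivWithin_le
    (fun z hz => (hf z hz).hasFDerivWithinAt) hbound (mem_ball_self (pos_of_mem_ball hy)) hy

theorem mem_ball_zero_of_norm_le_pow_mul {E : Type*} [SeminormedAddCommGroup E] {x y : E}
    {R c : ℝ} {i : ℕ} (hc0 : 0 ≤ c) (hc1 : c ≤ 1) (hx : x ∈ ball 0 R) (hy : ‖y‖ ≤ c ^ i * ‖x‖) :
    y ∈ ball 0 R :=
  mem_ball_zero_iff.mpr <| (hy.trans (mul_le_of_le_one_left (norm_nonneg x)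
    (pow_le_one₀ hc0 hc1))).trans_lt (mem_ball_zero_iff.mp hx)

section

variable {d : ℕ}

theorem norm_compSeq_le {n : ℕ} {h : ℕ → Euc d → Euc d} {Dh : ℕ → Euc d → Euc d →L[ℝ] Euc d}
    {R c : ℝ} (hc0 : 0 ≤ c) (hc1 : c ≤ 1) (hfix : ∀ j, 1 ≤ j → j ≤ n → h j 0 = 0)
    (hderiv : ∀ j, 1 ≤ j → j ≤ n → ∀ y ∈ ball (0 : Euc d) R, HasFDerivAt (h j) (Dh j y) y)
    (hbound : ∀ j, 1 ≤ j → j ≤ n → ∀ y ∈ ball (0 : Euc d) R, ‖Dh j y‖ ≤ c)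
    {x : Euc d} (hx : x ∈ ball 0 R) : ∀ i ≤ n, ‖compSeq h i x‖ ≤ c ^ i * ‖x‖ := by
  intro i
  induction i with
  | zero => intro _; simp [compSeq]
  | succ i ih =>
    intro hi
    have hmem := mem_ball_zero_of_norm_le_pow_mul hc0 hc1 hx (ih (by omega))
    calc ‖h (i + 1) (compSeq h i x)‖
        ≤ c * ‖compSeq h i x‖ := norm_le_mul_norm_of_hasFDerivAt (hfix _ (by omega) hi)
          (hderiv _ (by omega) hi) (hbound _ (by omega) hi) hmem
      _ ≤ c ^ (i + 1) * ‖x‖ := by rw [pow_succ', mul_assoc]; gcongr; exact ih (by omega)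

theorem mul_norm_le_of_le_conorm {T : Euc d →L[ℝ] Euc d} {c : ℝ} (h : c ≤ conorm T)
    (v : Euc d) : c * ‖v‖ ≤ ‖T v‖ := by
  rcases eq_or_ne v 0 with rfl | hv
  · simp
  have hunit : ‖T (‖v‖⁻¹ • v)‖ ∈ (fun v => ‖T v‖) '' {v : Euc d | ‖v‖ = 1} :=
    ⟨_, by simp [norm_smul, norm_ne_zero_iff.mpr hv], rfl⟩
  have hbdd : BddBelow ((fun v => ‖T v‖) '' {v : Euc d | ‖v‖ = 1}) :=
    ⟨0, by rintro _ ⟨w, _, rfl⟩; exact norm_nonneg _⟩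
  have hc : c ≤ ‖v‖⁻¹ * ‖T v‖ := by
    simpa [norm_smul] using h.trans (csInf_le hbdd hunit)
  rwa [inv_mul_eq_div, le_div_iff₀ (norm_pos_iff.mpr hv)] at hc

theorem norm_symm_le_inv_of_le_conorm {D : Euc d ≃L[ℝ] Euc d} {c : ℝ} (hc : 0 < c)
    (h : c ≤ conorm (D : Euc d →L[ℝ] Euc d)) : ‖(D.symm : Euc d →L[ℝ] Euc d)‖ ≤ c⁻¹ := by
  refine ContinuousLinearMap.opNorm_le_bound _ (inv_nonneg.mpr hc.le) fun w => ?_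
  rw [inv_mul_eq_div, le_div_iff₀ hc, mul_comm]
  simpa using mul_norm_le_of_le_conorm h (D.symm w)

theorem cdet_mul_cdet_symm (e : Euc d ≃L[ℝ] Euc d) : cdet e * cdet e.symm = 1 := by
  rw [cdet, cdet, ← LinearMap.det_comp]
  convert LinearMap.det_id
  ext v
  simp

theorem abs_cdet_symm (e : Euc d ≃L[ℝ] Euc d) : |cdet e.symm| = |cdet e|⁻¹ := by
  rw [eq_inv_of_mul_eq_one_right (cdet_mul_cdet_symm e), abs_inv]

theorem inv_abs_cdet_rpow_le_norm_symm (hd : 1 ≤ d) (e : Euc d ≃L[ℝ] Euc d) :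
    (|cdet e| ^ ((1 : ℝ) / d))⁻¹ ≤ ‖(e.symm : Euc d →L[ℝ] Euc d)‖ := by
  have hdet : |cdet e.symm| ≤ ‖(e.symm : Euc d →L[ℝ] Euc d)‖ ^ d := by
    have := abs_det_le_opNorm_pow (e.symm : Euc d →L[ℝ] Euc d)
    rwa [finrank_euclideanSpace_fin] at this
  rw [← Real.inv_rpow (abs_nonneg _), ← abs_cdet_symm, one_div,
    ← Real.pow_rpow_inv_natCast (norm_nonneg _) (by omega : d ≠ 0)]
  exact Real.rpow_le_rpow (abs_nonneg _) hdet (by positivity)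

theorem IsConformal.norm_le (hd : 1 ≤ d) {κ : ℝ} {e : Euc d ≃L[ℝ] Euc d}
    (he : IsConformal κ e) : ‖(e : Euc d →L[ℝ] Euc d)‖ ≤ κ * |cdet e| ^ ((1 : ℝ) / d) := by
  have hpos : 0 < |cdet e| ^ ((1 : ℝ) / d) :=
    Real.rpow_pos_of_pos (abs_pos.mpr (left_ne_zero_of_mul_eq_one (cdet_mul_cdet_symm e))) _
  rw [← div_le_iff₀ hpos, div_eq_mul_inv]
  calc ‖(e : Euc d →L[ℝ] Euc d)‖ * (|cdet e| ^ ((1 : ℝ) / d))⁻¹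
      ≤ ‖(e : Euc d →L[ℝ] Euc d)‖ * ‖(e.symm : Euc d →L[ℝ] Euc d)‖ := by
        gcongr; exact inv_abs_cdet_rpow_le_norm_symm hd e
    _ ≤ κ := he

theorem isConformal_refl {κ : ℝ} (hκ : 1 ≤ κ) :
    IsConformal κ (ContinuousLinearEquiv.refl ℝ (Euc d)) :=
  calc _ ≤ 1 * 1 := by gcongr <;> exact ContinuousLinearMap.norm_id_le
    _ ≤ κ := by rwa [one_mul]

theorem IsConformal.norm_conj_sub_le {A D D' : Euc d ≃L[ℝ] Euc d} {κ l ε : ℝ}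
    (hA : IsConformal κ A) (hl : 0 < l) (hD : l ≤ conorm (D : Euc d →L[ℝ] Euc d))
    (hε : ‖(D' : Euc d →L[ℝ] Euc d) - D‖ ≤ ε) :
    ‖(A.symm : Euc d →L[ℝ] Euc d)‖ * ‖(D.symm : Euc d →L[ℝ] Euc d)‖ *
      ‖(D' : Euc d →L[ℝ] Euc d) - D‖ * ‖(A : Euc d →L[ℝ] Euc d)‖ ≤ κ * l⁻¹ * ε :=
  calc _ = ‖(A : Euc d →L[ℝ] Euc d)‖ * ‖(A.symm : Euc d →L[ℝ] Euc d)‖ *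
        ‖(D.symm : Euc d →L[ℝ] Euc d)‖ * ‖(D' : Euc d →L[ℝ] Euc d) - D‖ := by ring
    _ ≤ κ * l⁻¹ * ε := by
      have hκ : 0 ≤ κ := (mul_nonneg (norm_nonneg _) (norm_nonneg _)).trans hA
      gcongr
      exacts [hA, norm_symm_le_inv_of_le_conorm hl hD]

theorem blockProd_symm_mul_blockProd_succ (D D' : ℕ → Euc d ≃L[ℝ] Euc d) (k : ℕ) :
    ((blockProd D 0 (k + 1)).symm : Euc d →L[ℝ] Euc d) *
        (blockProd D' 0 (k + 1) : Euc d →L[ℝ] Euc d) =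
      (1 + ((blockProd D 0 k).symm : Euc d →L[ℝ] Euc d) *
          ((D (k + 1)).symm : Euc d →L[ℝ] Euc d) * ((D' (k + 1) : Euc d →L[ℝ] Euc d) - D (k + 1)) *
          (blockProd D 0 k : Euc d →L[ℝ] Euc d)) *
        (((blockProd D 0 k).symm : Euc d →L[ℝ] Euc d) *
          (blockProd D' 0 k : Euc d →L[ℝ] Euc d)) := by
  ext v
  simp [blockProd]

theorem norm_blockProd_le_mul_prod (D D' : ℕ → Euc d ≃L[ℝ] Euc d) {n : ℕ} {c : ℕ → ℝ}
    (hc : ∀ k < n, ‖((blockProd D 0 k).symm : Euc d →L[ℝ] Euc d)‖ *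
        ‖((D (k + 1)).symm : Euc d →L[ℝ] Euc d)‖ * ‖(D' (k + 1) : Euc d →L[ℝ] Euc d) - D (k + 1)‖ *
        ‖(blockProd D 0 k : Euc d →L[ℝ] Euc d)‖ ≤ c k) :
    ‖(blockProd D' 0 n : Euc d →L[ℝ] Euc d)‖ ≤
      ‖(blockProd D 0 n : Euc d →L[ℝ] Euc d)‖ * ∏ k ∈ Finset.range n, (1 + c k) := by
  have hY : ∀ k ≤ n, ‖((blockProd D 0 k).symm : Euc d →L[ℝ] Euc d) *
      (blockProd D' 0 k : Euc d →L[ℝ] Euc d)‖ ≤ ∏ i ∈ Finset.range k, (1 + c i) := by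
    intro k
    induction k with
    | zero =>
      intro _
      refine (norm_mul_le _ _).trans (mul_le_one₀ ?_ (norm_nonneg _) ?_) <;>
        exact ContinuousLinearMap.norm_id_le
    | succ k ih =>
      intro hk
      have hck : 0 ≤ c k := (by positivity : (0 : ℝ) ≤ _).trans (hc k hk)
      rw [blockProd_symm_mul_blockProd_succ, Finset.prod_range_succ, mul_comm _ (1 + c k)]
      refine (norm_mul_le _ _).trans (mul_le_mul ?_ (ih (by omega)) (norm_nonneg _) (by linarith))
      refine (norm_add_le _ _).trans (add_le_add ContinuousLinearMap.norm_id_le ?_)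
      exact (norm_mul_le_of_le norm_mul₃_le le_rfl).trans (hc k hk)
  calc ‖(blockProd D' 0 n : Euc d →L[ℝ] Euc d)‖
      = ‖(blockProd D 0 n : Euc d →L[ℝ] Euc d) * (((blockProd D 0 n).symm : Euc d →L[ℝ] Euc d) *
          (blockProd D' 0 n : Euc d →L[ℝ] Euc d))‖ := by
        congr 1; ext v; simp
    _ ≤ _ := (norm_mul_le _ _).trans (by gcongr; exact hY n le_rfl)

end

/-- For `C^{1+Lip}` diffeomorphisms `h_j` of `B(0,R) ⊂ ℝ^d` fixing `0`, with
derivatives Lipschitz with constant `C`, `λ̲ ≤ m(D_y h_j)`, `‖D_y h_j‖ ≤ λ̄ < 1`, and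
`κ`-conformal derivatives of the partial compositions at `0`, there is `C₁ > 0`
(uniform in the sequence) with `‖D_x h^n‖ ≤ C₁ |det D_0 h^n|^(1/d)` for all `n ≥ 1` and
`x ∈ B(0,R)`. Here `D_x h^n` is the product of the derivatives along the orbit of `x`. -/
theorem stmt10 (d : ℕ) (hd : 1 ≤ d) (R C κ lamL lamU : ℝ)
    (hR : 0 < R) (hC : 0 < C) (hκ : 1 ≤ κ) (hlamL : 0 < lamL) (hlam : lamL < lamU)
    (hlamU : lamU < 1) :
    ∃ C₁ : ℝ, 0 < C₁ ∧
      ∀ (n : ℕ), 1 ≤ n → ∀ (h : ℕ → Euc d → Euc d) (Dh : ℕ → Euc d → (Euc d ≃L[ℝ] Euc d)),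
        (∀ j, 1 ≤ j → j ≤ n → h j 0 = 0) →
        (∀ j, 1 ≤ j → j ≤ n → ∀ y ∈ Metric.ball (0 : Euc d) R,
          HasFDerivAt (h j) (Dh j y : Euc d →L[ℝ] Euc d) y) →
        (∀ j, 1 ≤ j → j ≤ n → ∀ y ∈ Metric.ball (0 : Euc d) R,
          ∀ y' ∈ Metric.ball (0 : Euc d) R,
            ‖(Dh j y : Euc d →L[ℝ] Euc d) - (Dh j y' : Euc d →L[ℝ] Euc d)‖ ≤
              C * ‖y - y'‖) →
        (∀ j, 1 ≤ j → j ≤ n → ∀ y ∈ Metric.ball (0 : Euc d) R,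
          lamL ≤ conorm (Dh j y : Euc d →L[ℝ] Euc d) ∧
            ‖(Dh j y : Euc d →L[ℝ] Euc d)‖ ≤ lamU) →
        (∀ k, 1 ≤ k → k ≤ n → IsConformal κ (blockProd (fun j => Dh j 0) 0 k)) →
        ∀ x ∈ Metric.ball (0 : Euc d) R,
          ‖(blockProd (fun j => Dh j (compSeq h (j - 1) x)) 0 n : Euc d →L[ℝ] Euc d)‖ ≤
            C₁ * |cdet (blockProd (fun j => Dh j 0) 0 n)| ^ ((1 : ℝ) / d) := by
  have hlamU0 : 0 ≤ lamU := (hlamL.trans hlam).le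
  set a := κ * lamL⁻¹ * (C * R)
  have ha : 0 ≤ a := by positivity
  refine ⟨κ * Real.exp (a / (1 - lamU)), by positivity, ?_⟩
  intro n _ h Dh hfix hderiv hlip hbound hconf x hx
  set A := blockProd (fun j => Dh j 0) 0
  have hconf₀ : ∀ k ≤ n, IsConformal κ (A k) := by
    rintro (_ | k) hk
    exacts [isConformal_refl hκ, hconf _ (by omega) hk]
  have horbit := norm_compSeq_le (Dh := fun j y => (Dh j y : Euc d →L[ℝ] Euc d)) hlamU0
    hlamU.le hfix hderiv (fun j hj hjn y hy => (hbound j hj hjn y hy).2) hx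
  have hdiff : ∀ k < n, ‖(Dh (k + 1) (compSeq h k x) : Euc d →L[ℝ] Euc d) - Dh (k + 1) 0‖ ≤
      C * (lamU ^ k * R) := fun k hk =>
    (hlip (k + 1) (by omega) hk _ (mem_ball_zero_of_norm_le_pow_mul hlamU0 hlamU.le hx
      (horbit k hk.le)) 0 (mem_ball_self hR)).trans <| by
        rw [sub_zero]
        gcongr
        exact (horbit k hk.le).trans (by gcongr; exact (mem_ball_zero_iff.mp hx).le)
  calc _ ≤ ‖(A n : Euc d →L[ℝ] Euc d)‖ * ∏ k ∈ Finset.range n, (1 + a * lamU ^ k) :=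
        norm_blockProd_le_mul_prod (fun j => Dh j 0) (fun j => Dh j (compSeq h (j - 1) x))
          fun k hk => ((hconf₀ k hk.le).norm_conj_sub_le hlamL
            (hbound (k + 1) (by omega) hk 0 (mem_ball_self hR)).1 (hdiff k hk)).trans_eq (by ring)
    _ ≤ κ * |cdet (A n)| ^ ((1 : ℝ) / d) * Real.exp (a / (1 - lamU)) := by
        gcongr
        exacts [IsConformal.norm_le hd (hconf₀ n le_rfl),
          prod_one_add_mul_pow_le_exp ha hlamU0 hlamU n]
    _ = _ := by ring
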